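/- Let A be a complete normed ring with unit 1, R : ℝ → A Bochner measurable, β : ℝ → ℝ integrable on ℝ with ‖R(τ)‖ ≤ β(τ) a.e., Q(t,0) the Dyson series and Q₊ = lim_{t→+∞} Q(t,0) its norm limit. Then for every t ≥ 0, ‖Q₊ − Q(t,0)‖ ≤ exp(∫_ℝ β(τ) dτ) · ∫_t^∞ β(τ) dτ. -/

import Mathlib

open MeasureTheory intervalIntegral Filter Topology

/-- The `k`-fold time-ordered iterated Bochner integral
`∫_s^t R(t₁) (∫_s^{t₁} R(t₂) ( ⋯ (∫_s^{t_{k−1}} R(t_k) dt_k) ⋯ ) dt₂) dt₁`. -/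
noncomputable def timeOrderedIntegral {A : Type*} [NormedRing A] [NormedSpace ℝ A]
    (f : ℝ → A) (s : ℝ) : ℕ → ℝ → A
  | 0, _ => 1
  | k + 1, t => ∫ τ in s..t, f τ * timeOrderedIntegral f s k τ

/-- The Dyson series
`Q(t,s) = 1 + Σ_{k≥1} i^k ∫_s^t R(t₁) ∫_s^{t₁} R(t₂) ⋯ ∫_s^{t_{k−1}} R(t_k) dt_k ⋯ dt₁`. -/
noncomputable def dyson {A : Type*} [NormedRing A] [NormedAlgebra ℂ A]
    (R : ℝ → A) (s t : ℝ) : A :=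
  1 + ∑' k : ℕ, (Complex.I ^ (k + 1)) • timeOrderedIntegral R s (k + 1) t

/-!
Write `T_k = timeOrderedIntegral R s k` and `B t = ∫_s^t β`. By induction, `‖T_k(t)‖ ≤ B(t)^k / k!`
for `k ≥ 1` and `t ≥ s`, because `B^(k+1) / (k+1)` is absolutely continuous with a.e. derivative
`β B^k`. The increment `T_(k+1)(t') - T_(k+1)(t) = ∫_t^t' R T_k` therefore has norm at most
`(∫_t^∞ β) (∫ β)^k / k!`, and summing over `k` bounds `‖Q(t') - Q(t)‖` by `exp (∫ β) ∫_t^∞ β`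
uniformly in `t' ≥ t`; let `t' → ∞`.
-/

open Set Interval

theorem MeasureTheory.LocallyIntegrable.intervalIntegrable {E : Type*} [NormedAddCommGroup E]
    {f : ℝ → E} {μ : Measure ℝ} [IsLocallyFiniteMeasure μ] (hf : LocallyIntegrable f μ)
    (a b : ℝ) : IntervalIntegrable f μ a b :=
  (hf.integrableOn_isCompact isCompact_uIcc).intervalIntegrable

theorem intervalIntegral_le_integral_of_ae_nonneg {β : ℝ → ℝ} (hβ : Integrable β)
    (hβ0 : 0 ≤ᵐ[volume] β) {a b : ℝ} (hab : a ≤ b) : ∫ τ in a..b, β τ ≤ ∫ τ, β τ := by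
  rw [integral_of_le hab]
  exact setIntegral_le_integral hβ hβ0

theorem AbsolutelyContinuousOnInterval.pow {f : ℝ → ℝ} {a b : ℝ}
    (hf : AbsolutelyContinuousOnInterval f a b) (n : ℕ) :
    AbsolutelyContinuousOnInterval (fun x => f x ^ n) a b := by
  induction n with
  | zero =>
    simpa using (LipschitzWith.const (1 : ℝ)).lipschitzOnWith.absolutelyContinuousOnInterval
  | succ n ih => simpa only [pow_succ] using ih.fun_mul hf

theorem integral_mul_pow_primitive {β : ℝ → ℝ} {s t : ℝ}
    (hβ : IntervalIntegrable β volume s t) (k : ℕ) :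
    ∫ τ in s..t, β τ * (∫ σ in s..τ, β σ) ^ k = (∫ σ in s..t, β σ) ^ (k + 1) / (k + 1) := by
  have hderiv : ∀ᵐ τ, τ ∈ Ι s t →
      deriv (fun x => (∫ σ in s..x, β σ) ^ (k + 1)) τ
        = (k + 1) * (β τ * (∫ σ in s..τ, β σ) ^ k) := by
    filter_upwards [hβ.ae_hasDerivAt_integral] with τ hτ hmem
    rw [((hτ (uIoc_subset_uIcc hmem) s left_mem_uIcc).fun_pow (k + 1)).deriv]
    push_cast
    ring
  have hFTC := ((hβ.absolutelyContinuousOnInterval_intervalIntegral left_mem_uIcc).pow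
    (k + 1)).integral_deriv_eq_sub
  rw [integral_congr_ae hderiv, intervalIntegral.integral_const_mul, integral_same,
    zero_pow k.succ_ne_zero, sub_zero] at hFTC
  rw [← hFTC]
  field_simp

section TimeOrdered

variable {A : Type*} [NormedRing A] [NormedSpace ℝ A] {R : ℝ → A} {s : ℝ}

theorem integrable_mul_timeOrderedIntegral (hR : Integrable R) (k : ℕ) :
    Integrable (fun τ => R τ * timeOrderedIntegral R s k τ) := by
  induction k with
  | zero => simpa [timeOrderedIntegral] using hR
  | succ k ih =>
    refine hR.mul_bdd
      (continuous_primitive (fun _ _ => ih.intervalIntegrable) s).aestronglyMeasurable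
      (c := ∫ τ, ‖R τ * timeOrderedIntegral R s k τ‖) (Eventually.of_forall fun t => ?_)
    exact norm_integral_le_integral_norm_uIoc.trans
      (setIntegral_le_integral ih.norm (ae_of_all _ fun _ => norm_nonneg _))

variable {β : ℝ → ℝ}

theorem norm_timeOrderedIntegral_succ_le_of_ae (hβ : LocallyIntegrable β) {k : ℕ}
    (hk : ∀ᵐ τ, s ≤ τ → ‖R τ * timeOrderedIntegral R s k τ‖
      ≤ β τ * ((∫ σ in s..τ, β σ) ^ k / k.factorial))
    {t : ℝ} (ht : s ≤ t) :
    ‖timeOrderedIntegral R s (k + 1) t‖ ≤ (∫ σ in s..t, β σ) ^ (k + 1) / (k + 1).factorial :=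
  calc ‖timeOrderedIntegral R s (k + 1) t‖
      ≤ ∫ τ in s..t, β τ * ((∫ σ in s..τ, β σ) ^ k / k.factorial) :=
        norm_integral_le_of_norm_le ht (hk.mono fun τ h hτ => h hτ.1.le)
          ((hβ.intervalIntegrable s t).mul_continuousOn
            (((continuous_primitive hβ.intervalIntegrable s).pow k).div_const _).continuousOn)
    _ = (∫ σ in s..t, β σ) ^ (k + 1) / (k + 1).factorial := by
        simp_rw [← mul_div_assoc]
        rw [intervalIntegral.integral_div, integral_mul_pow_primitive (hβ.intervalIntegrable s t),
          Nat.factorial_succ]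
        push_cast
        field_simp

-- Stated for `R τ * T_k τ` rather than `T_k τ`: at `k = 0` the latter would need `‖1‖ ≤ 1`,
-- which a `NormedRing` need not satisfy.
theorem ae_norm_mul_timeOrderedIntegral_le (hβ : LocallyIntegrable β)
    (hRβ : ∀ᵐ τ, ‖R τ‖ ≤ β τ) (k : ℕ) :
    ∀ᵐ τ, s ≤ τ → ‖R τ * timeOrderedIntegral R s k τ‖
      ≤ β τ * ((∫ σ in s..τ, β σ) ^ k / k.factorial) := by
  induction k with
  | zero => simpa [timeOrderedIntegral] using hRβ.mono fun τ h (_ : s ≤ τ) => h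
  | succ k ih =>
    filter_upwards [hRβ] with τ hτ hsτ
    exact (norm_mul_le _ _).trans
      (mul_le_mul hτ (norm_timeOrderedIntegral_succ_le_of_ae hβ ih hsτ) (norm_nonneg _)
        ((norm_nonneg _).trans hτ))

theorem norm_timeOrderedIntegral_succ_le (hβ : LocallyIntegrable β)
    (hRβ : ∀ᵐ τ, ‖R τ‖ ≤ β τ) (k : ℕ) {t : ℝ} (ht : s ≤ t) :
    ‖timeOrderedIntegral R s (k + 1) t‖ ≤ (∫ σ in s..t, β σ) ^ (k + 1) / (k + 1).factorial :=
  norm_timeOrderedIntegral_succ_le_of_ae hβ (ae_norm_mul_timeOrderedIntegral_le hβ hRβ k) ht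

theorem norm_timeOrderedIntegral_succ_sub_le (hR : AEStronglyMeasurable R) (hβ : Integrable β)
    (hRβ : ∀ᵐ τ, ‖R τ‖ ≤ β τ) (k : ℕ) {t t' : ℝ} (hst : s ≤ t) (htt' : t ≤ t') :
    ‖timeOrderedIntegral R s (k + 1) t' - timeOrderedIntegral R s (k + 1) t‖
      ≤ (∫ τ in Ioi t, β τ) * ((∫ τ, β τ) ^ k / k.factorial) := by
  have hβ0 : 0 ≤ᵐ[volume] β := hRβ.mono fun τ h => (norm_nonneg _).trans h
  have hRT := integrable_mul_timeOrderedIntegral (s := s) (hβ.mono' hR hRβ) k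
  have hbound : ∀ᵐ τ, τ ∈ Ioc t t' → ‖R τ * timeOrderedIntegral R s k τ‖
      ≤ β τ * ((∫ τ, β τ) ^ k / k.factorial) := by
    filter_upwards [ae_norm_mul_timeOrderedIntegral_le hβ.locallyIntegrable hRβ k, hβ0]
      with τ hτ hβτ hmem
    have hsτ : s ≤ τ := hst.trans hmem.1.le
    refine (hτ hsτ).trans (mul_le_mul_of_nonneg_left ?_ hβτ)
    gcongr
    · exact intervalIntegral.integral_nonneg_of_ae hsτ hβ0
    · exact intervalIntegral_le_integral_of_ae_nonneg hβ hβ0 hsτ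
  calc ‖timeOrderedIntegral R s (k + 1) t' - timeOrderedIntegral R s (k + 1) t‖
      = ‖∫ τ in t..t', R τ * timeOrderedIntegral R s k τ‖ := by
        rw [← integral_interval_sub_left hRT.intervalIntegrable hRT.intervalIntegrable]
        rfl
    _ ≤ ∫ τ in t..t', β τ * ((∫ τ, β τ) ^ k / k.factorial) :=
        norm_integral_le_of_norm_le htt' hbound (hβ.intervalIntegrable.mul_const _)
    _ ≤ (∫ τ in Ioi t, β τ) * ((∫ τ, β τ) ^ k / k.factorial) := by
        rw [intervalIntegral.integral_mul_const, integral_of_le htt']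
        exact mul_le_mul_of_nonneg_right
          (setIntegral_mono_set hβ.integrableOn (ae_restrict_of_ae hβ0)
            Ioc_subset_Ioi_self.eventuallyLE)
          (div_nonneg (pow_nonneg (integral_nonneg_of_ae hβ0) k) (by positivity))

end TimeOrdered

section Dyson

variable {A : Type*} [NormedRing A] [NormedAlgebra ℂ A] {R : ℝ → A} {β : ℝ → ℝ} {s : ℝ}

theorem summable_dyson [CompleteSpace A] (hβ : Integrable β) (hRβ : ∀ᵐ τ, ‖R τ‖ ≤ β τ)
    {t : ℝ} (hst : s ≤ t) :
    Summable fun k : ℕ => Complex.I ^ (k + 1) • timeOrderedIntegral R s (k + 1) t := by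
  have hβ0 : 0 ≤ᵐ[volume] β := hRβ.mono fun τ h => (norm_nonneg _).trans h
  refine .of_norm_bounded ((Real.summable_pow_div_factorial (∫ τ, β τ)).comp_injective
    (add_left_injective 1)) fun k => ?_
  rw [norm_smul, norm_pow, Complex.norm_I, one_pow, one_mul]
  refine (norm_timeOrderedIntegral_succ_le hβ.locallyIntegrable hRβ k hst).trans ?_
  rw [Function.comp_apply]
  gcongr
  · exact intervalIntegral.integral_nonneg_of_ae hst hβ0
  · exact intervalIntegral_le_integral_of_ae_nonneg hβ hβ0 hst

theorem norm_dyson_sub_le [CompleteSpace A] (hR : AEStronglyMeasurable R) (hβ : Integrable β)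
    (hRβ : ∀ᵐ τ, ‖R τ‖ ≤ β τ) {t t' : ℝ} (hst : s ≤ t) (htt' : t ≤ t') :
    ‖dyson R s t' - dyson R s t‖ ≤ Real.exp (∫ τ, β τ) * ∫ τ in Ioi t, β τ := by
  rw [dyson, dyson, add_sub_add_left_eq_sub,
    ← (summable_dyson hβ hRβ (hst.trans htt')).tsum_sub (summable_dyson hβ hRβ hst), mul_comm]
  refine tsum_of_norm_bounded
    ((Real.exp_eq_exp_ℝ ▸ NormedSpace.expSeries_div_hasSum_exp _).mul_left _) fun k => ?_
  rw [← smul_sub, norm_smul, norm_pow, Complex.norm_I, one_pow, one_mul]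
  exact norm_timeOrderedIntegral_succ_sub_le hR hβ hRβ k hst htt'

end Dyson

theorem dyson_rate_of_convergence
    {A : Type*} [NormedRing A] [NormedAlgebra ℂ A] [CompleteSpace A]
    (R : ℝ → A) (β : ℝ → ℝ)
    (hR : AEStronglyMeasurable R (volume : Measure ℝ))
    (hβ : Integrable β (volume : Measure ℝ))
    (hRβ : ∀ᵐ τ ∂(volume : Measure ℝ), ‖R τ‖ ≤ β τ)
    (Qp : A) (hQp : Tendsto (fun t : ℝ => dyson R 0 t) atTop (𝓝 Qp)) :
    ∀ t : ℝ, 0 ≤ t →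
      ‖Qp - dyson R 0 t‖ ≤ Real.exp (∫ τ, β τ) * ∫ τ in Set.Ioi t, β τ := by
  intro t ht
  refine le_of_tendsto ((hQp.sub_const _).norm) ?_
  filter_upwards [eventually_ge_atTop t] with t' htt'
  exact norm_dyson_sub_le hR hβ hRβ ht htt'
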